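/- arXiv:2602.06836 — 3 statements merged into one kernel-verified Lean document; each statement's English description precedes it below -/
import Mathlib

section
/- Fix integers D ≥ 1 and M ≥ 2, a symmetric positive semidefinite real D×D matrix C, a vector a ∈ ℝ^D, and positive reals β_A, β_I, β_D. Let A = 2β_I C − β_D I, assume A is invertible, let B = (2β_I C + (M−1)β_D I)^{-1}, set s_0 = β_A 𝟙^T B a, s_1 = 𝟙^T B 𝟙, s_2 = 𝟙^T B A^{-1} 𝟙, and α = 𝟙^T A^{-1} 𝟙 = s_1 + Mβ_D s_2. Suppose vectors w_1,…,w_M ∈ ℝ^D with 𝟙^T w_m = 1 for every m and reals λ_1,…,λ_M satisfy, for every m, β_A a − 2β_I C w_m − β_D Σ_{j≠m} w_j = λ_m 𝟙. Then for every m, −α λ_m + β_D s_2 Σ_{i=1}^M λ_i = 1 − s_0; and if α ≠ 0, then all the multipliers are equal: λ_1 = ⋯ = λ_M = λ* where λ* = (β_A 𝟙^T B a − 1)/(𝟙^T B 𝟙). -/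
open Matrix Finset

/-!
Put `S = ∑ⱼ wⱼ` and `T = ∑ᵢ λᵢ`, and note `B⁻¹ = A + M β_D I`. The stationarity equation reads
`A wₘ = β_A a − β_D S − λₘ 𝟙`; summing over `m` gives `B⁻¹ S = M β_A a − T 𝟙`. Solving for `wₘ`
with `A⁻¹` and pairing with `𝟙` turns `𝟙ᵀwₘ = 1` into a scalar equation, which the resolvent
identity `A⁻¹ − B = M β_D B A⁻¹` (with `A⁻¹` and `B` commuting) brings to the stated form.
That equation shows `α λₘ` is independent of `m`, so for `α ≠ 0` the multipliers coincide, and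
summing it over `m` pins down their common value.
-/

namespace Matrix

variable {n K : Type*} [Fintype n] [DecidableEq n] [Field K]

theorem commute_nonsing_inv_add_smul_one_nonsing_inv (A : Matrix n n K) (c : K) :
    Commute A⁻¹ (A + c • 1)⁻¹ := by
  rw [nonsing_inv_eq_ringInverse, nonsing_inv_eq_ringInverse]
  exact ((Commute.refl A).add_right ((Commute.one_right A).smul_right c)).ringInverse_ringInverse

theorem nonsing_inv_sub_nonsing_inv_add_smul_one {A : Matrix n n K} (hA : IsUnit A.det) {c : K}
    (hAc : IsUnit (A + c • 1).det) :
    A⁻¹ - (A + c • 1)⁻¹ = c • ((A + c • 1)⁻¹ * A⁻¹) := by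
  calc A⁻¹ - (A + c • 1)⁻¹ = (A + c • 1)⁻¹ * ((A + c • 1) * A⁻¹ - 1) := by
        rw [mul_sub, ← mul_assoc, nonsing_inv_mul _ hAc, one_mul, mul_one]
    _ = c • ((A + c • 1)⁻¹ * A⁻¹) := by
        rw [add_mul, mul_nonsing_inv _ hA, smul_mul_assoc, one_mul, add_sub_cancel_left,
          mul_smul_comm]

theorem dotProduct_nonsing_inv_mulVec {A : Matrix n n K} (hA : IsUnit A.det) {c : K}
    (hAc : IsUnit (A + c • 1).det) (u v : n → K) :
    u ⬝ᵥ A⁻¹ *ᵥ v = u ⬝ᵥ (A + c • 1)⁻¹ *ᵥ v + c * (u ⬝ᵥ (A + c • 1)⁻¹ *ᵥ (A⁻¹ *ᵥ v)) := by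
  have h := congrArg (fun X => u ⬝ᵥ X *ᵥ v) (nonsing_inv_sub_nonsing_inv_add_smul_one hA hAc)
  simp only [sub_mulVec, smul_mulVec, ← mulVec_mulVec, dotProduct_sub, dotProduct_smul,
    smul_eq_mul] at h
  linear_combination h

end Matrix

section Stationarity

variable {n ι K : Type*} [Fintype n] [DecidableEq n] [Fintype ι] [Field K]
  {A : Matrix n n K} {b : n → K} {c : K} {w : ι → n → K} {lam : ι → K}

theorem smul_sub_smul_one_mulVec_eq_of_stationary [DecidableEq ι] {r : K} {C : Matrix n n K}
    {m : ι} {l : K}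
    (h : b - r • (C *ᵥ w m) - c • ∑ j ∈ univ.erase m, w j = fun _ => l) :
    (r • C - c • 1) *ᵥ w m = b - c • ∑ j, w j - l • 1 := by
  rw [← add_sum_erase _ _ (mem_univ m)]
  simp only [sub_mulVec, smul_mulVec, one_mulVec]
  have hl : (fun _ => l : n → K) = l • 1 := by ext; simp
  rw [hl] at h
  linear_combination (norm := module) -h

theorem add_smul_one_mulVec_sum_eq_of_stationary
    (h : ∀ m, A *ᵥ w m = b - c • ∑ j, w j - lam m • 1) :
    (A + (Fintype.card ι * c) • 1) *ᵥ ∑ j, w j = (Fintype.card ι : K) • b - (∑ j, lam j) • 1 := by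
  rw [add_mulVec, mulVec_sum, sum_congr rfl fun m _ => h m, sum_sub_distrib, sum_sub_distrib,
    sum_const, sum_const, card_univ, ← sum_smul, smul_mulVec, one_mulVec,
    ← Nat.cast_smul_eq_nsmul K, ← Nat.cast_smul_eq_nsmul K]
  module

theorem neg_mul_add_mul_sum_eq_of_stationary (hA : IsUnit A.det)
    (hAc : IsUnit (A + (Fintype.card ι * c) • 1).det)
    (h : ∀ m, A *ᵥ w m = b - c • ∑ j, w j - lam m • 1) {m : ι} (hm : 1 ⬝ᵥ w m = 1) :
    -(1 ⬝ᵥ A⁻¹ *ᵥ 1) * lam m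
        + c * (1 ⬝ᵥ (A + (Fintype.card ι * c) • 1)⁻¹ *ᵥ (A⁻¹ *ᵥ 1)) * ∑ j, lam j
      = 1 - 1 ⬝ᵥ (A + (Fintype.card ι * c) • 1)⁻¹ *ᵥ b := by
  set B := (A + (Fintype.card ι * c) • 1)⁻¹
  have hw : w m = A⁻¹ *ᵥ (b - c • ∑ j, w j - lam m • 1) := by
    rw [← h m, mulVec_mulVec, nonsing_inv_mul _ hA, one_mulVec]
  have hS : ∑ j, w j = B *ᵥ ((Fintype.card ι : K) • b - (∑ j, lam j) • 1) := by
    rw [← add_smul_one_mulVec_sum_eq_of_stationary h, mulVec_mulVec, nonsing_inv_mul _ hAc,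
      one_mulVec]
  have hcomm : ∀ v, A⁻¹ *ᵥ (B *ᵥ v) = B *ᵥ (A⁻¹ *ᵥ v) := fun v => by
    rw [mulVec_mulVec, mulVec_mulVec, (commute_nonsing_inv_add_smul_one_nonsing_inv A _).eq]
  have hb := dotProduct_nonsing_inv_mulVec hA hAc 1 b
  rw [hw, hS] at hm
  simp only [mulVec_sub, mulVec_smul, hcomm, dotProduct_sub, dotProduct_smul, smul_eq_mul] at hm
  linear_combination hm - hb

end Stationarity

theorem eq_div_of_forall_neg_mul_add_mul_sum_eq {ι K : Type*} [Fintype ι] [Field K]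
    {α s₀ s₁ s₂ c : K} {lam : ι → K} (hα : α = s₁ + Fintype.card ι * c * s₂)
    (h : ∀ m, -α * lam m + c * s₂ * ∑ i, lam i = 1 - s₀) (hα₀ : α ≠ 0) (hs₁ : s₁ ≠ 0) (m : ι) :
    lam m = (s₀ - 1) / s₁ := by
  have hsum : s₁ * ∑ i, lam i = Fintype.card ι * (s₀ - 1) := by
    have := sum_congr rfl fun i (_ : i ∈ univ) => h i
    simp only [sum_add_distrib, ← mul_sum, sum_const, card_univ, nsmul_eq_mul] at this
    linear_combination -this - (∑ i, lam i) * hα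
  rw [eq_div_iff hs₁]
  refine mul_left_cancel₀ hα₀ ?_
  linear_combination -s₁ * h m + c * s₂ * hsum - (s₀ - 1) * hα

theorem stmt_8_general (D M : ℕ) (hD : 0 < D) (hM : 2 ≤ M)
    (C : Matrix (Fin D) (Fin D) ℝ) (hC : C.PosSemidef)
    (a : Fin D → ℝ) (βA βI βD : ℝ) (hβI : 0 < βI) (hβD : 0 < βD)
    (hAinv : IsUnit ((2 * βI) • C - βD • (1 : Matrix (Fin D) (Fin D) ℝ)).det)
    (w : Fin M → Fin D → ℝ) (lam : Fin M → ℝ)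
    (hsum : ∀ m, ∑ i, w m i = 1)
    (hstat : ∀ m, βA • a - (2 * βI) • (C *ᵥ w m)
        - βD • ∑ j ∈ Finset.univ.erase m, w j = fun _ => lam m) :
    let ones : Fin D → ℝ := fun _ => 1
    let A := (2 * βI) • C - βD • (1 : Matrix (Fin D) (Fin D) ℝ)
    let B := ((2 * βI) • C + (((M : ℝ) - 1) * βD) • (1 : Matrix (Fin D) (Fin D) ℝ))⁻¹
    let s0 := βA * (ones ⬝ᵥ B *ᵥ a)
    let s1 := ones ⬝ᵥ B *ᵥ ones
    let s2 := ones ⬝ᵥ B *ᵥ (A⁻¹ *ᵥ ones)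
    let α := ones ⬝ᵥ A⁻¹ *ᵥ ones
    (α = s1 + (M : ℝ) * βD * s2) ∧
    (∀ m, -α * lam m + βD * s2 * ∑ i, lam i = 1 - s0) ∧
    (α ≠ 0 → ∀ m, lam m = (βA * (ones ⬝ᵥ B *ᵥ a) - 1) / (ones ⬝ᵥ B *ᵥ ones)) := by
  intro ones A B s0 s1 s2 α
  have hBA : (2 * βI) • C + (((M : ℝ) - 1) * βD) • 1 = A + (Fintype.card (Fin M) * βD) • 1 := by
    rw [Fintype.card_fin]
    module
  have hpd : ((2 * βI) • C + (((M : ℝ) - 1) * βD) • (1 : Matrix (Fin D) (Fin D) ℝ)).PosDef := by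
    have hM₁ : (0 : ℝ) < ((M : ℝ) - 1) * βD := by
      have : (2 : ℝ) ≤ M := by exact_mod_cast hM
      nlinarith
    exact PosDef.posSemidef_add (hC.smul (a := 2 * βI) (by positivity)) (PosDef.one.smul hM₁)
  have hAc : IsUnit (A + (Fintype.card (Fin M) * βD) • 1).det := by
    rw [← hBA, ← isUnit_iff_isUnit_det]
    exact hpd.isUnit
  have hAw (m : Fin M) : A *ᵥ w m = βA • a - βD • ∑ j, w j - lam m • 1 :=
    smul_sub_smul_one_mulVec_eq_of_stationary (hstat m)
  have hα : α = s1 + Fintype.card (Fin M) * βD * s2 := by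
    have := dotProduct_nonsing_inv_mulVec (A := A) hAinv hAc ones ones
    rwa [← hBA] at this
  have hlam (m : Fin M) : -α * lam m + βD * s2 * ∑ i, lam i = 1 - s0 := by
    have := neg_mul_add_mul_sum_eq_of_stationary (A := A) hAinv hAc hAw (m := m)
      (by rw [one_dotProduct]; exact hsum m)
    rwa [← hBA, mulVec_smul, dotProduct_smul, smul_eq_mul] at this
  have hs1 : 0 < s1 := by
    have : Nonempty (Fin D) := ⟨⟨0, hD⟩⟩
    have := hpd.inv.dotProduct_mulVec_pos (one_ne_zero (α := Fin D → ℝ))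
    rwa [star_one] at this
  refine ⟨by rwa [Fintype.card_fin] at hα, hlam, fun hα₀ =>
    eq_div_of_forall_neg_mul_add_mul_sum_eq hα hlam hα₀ hs1.ne'⟩

/-- Normalizing the stationarity equations: with `A = 2β_I C − β_D I` invertible,
`B = (2β_I C + (M−1)β_D I)⁻¹`, `s₀ = β_A 𝟙ᵀBa`, `s₁ = 𝟙ᵀB𝟙`, `s₂ = 𝟙ᵀBA⁻¹𝟙`,
`α = 𝟙ᵀA⁻¹𝟙`, the multipliers satisfy `−αλ_m + β_D s₂ ∑ᵢ λᵢ = 1 − s₀` (and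
`α = s₁ + Mβ_D s₂`), and if `α ≠ 0` they are all equal to
`λ* = (β_A 𝟙ᵀBa − 1)/(𝟙ᵀB𝟙)`. -/
theorem stmt_8 (D M : ℕ) (hD : 0 < D) (hM : 2 ≤ M)
    (C : Matrix (Fin D) (Fin D) ℝ) (hC : C.PosSemidef)
    (a : Fin D → ℝ) (βA βI βD : ℝ) (hβA : 0 < βA) (hβI : 0 < βI) (hβD : 0 < βD)
    (hAinv : IsUnit ((2 * βI) • C - βD • (1 : Matrix (Fin D) (Fin D) ℝ)).det)
    (w : Fin M → Fin D → ℝ) (lam : Fin M → ℝ)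
    (hsum : ∀ m, ∑ i, w m i = 1)
    (hstat : ∀ m, βA • a - (2 * βI) • (C *ᵥ w m)
        - βD • ∑ j ∈ Finset.univ.erase m, w j = fun _ => lam m) :
    let ones : Fin D → ℝ := fun _ => 1
    let A := (2 * βI) • C - βD • (1 : Matrix (Fin D) (Fin D) ℝ)
    let B := ((2 * βI) • C + (((M : ℝ) - 1) * βD) • (1 : Matrix (Fin D) (Fin D) ℝ))⁻¹
    let s0 := βA * (ones ⬝ᵥ B *ᵥ a)
    let s1 := ones ⬝ᵥ B *ᵥ ones
    let s2 := ones ⬝ᵥ B *ᵥ (A⁻¹ *ᵥ ones)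
    let α := ones ⬝ᵥ A⁻¹ *ᵥ ones
    (α = s1 + (M : ℝ) * βD * s2) ∧
    (∀ m, -α * lam m + βD * s2 * ∑ i, lam i = 1 - s0) ∧
    (α ≠ 0 → ∀ m, lam m = (βA * (ones ⬝ᵥ B *ᵥ a) - 1) / (ones ⬝ᵥ B *ᵥ ones)) :=
  stmt_8_general D M hD hM C hC a βA βI βD hβI hβD hAinv w lam hsum hstat
end

section
/- Fix integers D ≥ 1 and M ≥ 2, a symmetric positive semidefinite real D×D matrix C, a vector a ∈ ℝ^D, and positive reals β_A, β_I, β_D. Let B = (2β_I C + (M−1)β_D I)^{-1}, λ* = (β_A 𝟙^T B a − 1)/(𝟙^T B 𝟙), and w* = B(β_A a − λ* 𝟙). Then 𝟙^T w* = 1; and if moreover every coordinate of w* is strictly positive (so w* lies in the interior of the simplex Δ_D), the homogeneous profile in which every player m ∈ {1,…,M} plays w* is a Nash equilibrium of the game with utilities u_m(w_1,…,w_M) = β_A a⬝w_m − β_I w_m^T C w_m − β_D Σ_{j≠m} w_m⬝w_j, i.e., for every m and every w ∈ Δ_D, β_A a⬝w − β_I w^T C w − β_D (M−1) w⬝w*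 ≤ β_A a⬝w* − β_I (w*)^T C w* − β_D (M−1) w*⬝w*. -/
/-!
Let `A = 2β_I C + (M−1)β_D I`, so that `B = A⁻¹`. Against opponents all playing `w*`, a
player's utility is the concave quadratic `w ↦ (β_A a − (M−1)β_D w*)⬝w − β_I wᵀCw`, and
`A w* = β_A a − λ* 𝟙` says exactly that its gradient at `w*` is `λ* 𝟙`, a Lagrange
condition for the constraint `𝟙⬝w = 1`. Concavity then makes `w*` a maximiser on the whole
hyperplane `𝟙⬝w = 1`, hence on the simplex; `λ*` is chosen so that `𝟙⬝w* = 1`.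
-/

open Matrix

namespace Matrix

variable {n : Type*}

lemma PosSemidef.smul_add_smul_one_posDef [DecidableEq n] {C : Matrix n n ℝ}
    (hC : C.PosSemidef) {s t : ℝ} (hs : 0 ≤ s) (ht : 0 < t) :
    (s • C + t • (1 : Matrix n n ℝ)).PosDef :=
  PosDef.posSemidef_add (hC.smul hs) (PosDef.one.smul ht)

variable [Fintype n]

lemma dotProduct_mulVec_sub_div_smul_eq_one {K : Type*} [Field K] (B : Matrix n n K)
    (u v : n → K) (c : K) (hu : u ⬝ᵥ B *ᵥ u ≠ 0) :
    u ⬝ᵥ B *ᵥ (c • v - ((c * (u ⬝ᵥ B *ᵥ v) - 1) / (u ⬝ᵥ B *ᵥ u)) • u) = 1 := by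
  rw [mulVec_sub, mulVec_smul, mulVec_smul, dotProduct_sub, dotProduct_smul, dotProduct_smul,
    smul_eq_mul, smul_eq_mul, div_mul_cancel₀ _ hu]
  ring

lemma PosSemidef.dotProduct_mulVec_comm {C : Matrix n n ℝ} (hC : C.PosSemidef) (x y : n → ℝ) :
    y ⬝ᵥ C *ᵥ x = x ⬝ᵥ C *ᵥ y := by
  have hCt : Cᵀ = C := by simpa using hC.1.eq
  simpa [hCt] using (dotProduct_transpose_mulVec C x y).symm

lemma PosSemidef.linear_sub_quadratic_le_of_gradient_eq_smul {C : Matrix n n ℝ}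
    (hC : C.PosSemidef) {β μ : ℝ} (hβ : 0 ≤ β) {g u x y : n → ℝ}
    (hgrad : g - (2 * β) • C *ᵥ x = μ • u) (hy : u ⬝ᵥ y = u ⬝ᵥ x) :
    g ⬝ᵥ y - β * (y ⬝ᵥ C *ᵥ y) ≤ g ⬝ᵥ x - β * (x ⬝ᵥ C *ᵥ x) := by
  have hcurv : 0 ≤ (y - x) ⬝ᵥ C *ᵥ (y - x) := by
    simpa using hC.dotProduct_mulVec_nonneg (y - x)
  have hdir : (g - (2 * β) • C *ᵥ x) ⬝ᵥ (y - x) = 0 := by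
    rw [hgrad, smul_dotProduct, dotProduct_sub, hy, sub_self, smul_zero]
  simp only [sub_dotProduct, dotProduct_sub, mulVec_sub, smul_dotProduct, smul_eq_mul]
    at hdir hcurv
  rw [dotProduct_comm (C *ᵥ x) y, dotProduct_comm (C *ᵥ x) x, hC.dotProduct_mulVec_comm x y]
    at hdir
  rw [hC.dotProduct_mulVec_comm x y] at hcurv
  nlinarith [mul_nonneg hβ hcurv]

end Matrix

theorem stmt_9_general (D M : ℕ) (hD : 0 < D) (hM : 2 ≤ M)
    (C : Matrix (Fin D) (Fin D) ℝ) (hC : C.PosSemidef)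
    (a : Fin D → ℝ) (βA βI βD : ℝ) (hβI : 0 < βI) (hβD : 0 < βD) :
    let ones : Fin D → ℝ := fun _ => 1
    let B := ((2 * βI) • C + (((M : ℝ) - 1) * βD) • (1 : Matrix (Fin D) (Fin D) ℝ))⁻¹
    let lamstar := (βA * (ones ⬝ᵥ B *ᵥ a) - 1) / (ones ⬝ᵥ B *ᵥ ones)
    let wstar := B *ᵥ (βA • a - lamstar • ones)
    (∑ i, wstar i = 1) ∧
    ((∀ i, 0 < wstar i) →
      ∀ w : Fin D → ℝ, (∀ i, 0 ≤ w i) → ∑ i, w i = 1 →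
        βA * (a ⬝ᵥ w) - βI * (w ⬝ᵥ C *ᵥ w) - βD * ((M : ℝ) - 1) * (w ⬝ᵥ wstar)
          ≤ βA * (a ⬝ᵥ wstar) - βI * (wstar ⬝ᵥ C *ᵥ wstar)
            - βD * ((M : ℝ) - 1) * (wstar ⬝ᵥ wstar)) := by
  intro ones B lamstar wstar
  set c := ((M : ℝ) - 1) * βD
  have hc : 0 < c := mul_pos (by linarith [show (2 : ℝ) ≤ M by exact_mod_cast hM]) hβD
  have hA := hC.smul_add_smul_one_posDef (by positivity : 0 ≤ 2 * βI) hc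
  have hones : ones ≠ 0 := fun h => one_ne_zero (congrFun h ⟨0, hD⟩)
  have hsum : ones ⬝ᵥ wstar = 1 :=
    dotProduct_mulVec_sub_div_smul_eq_one B ones a βA
      (by simpa using (hA.inv.dotProduct_mulVec_pos hones).ne')
  refine ⟨by simpa [ones, dotProduct] using hsum, fun _ w _ hw => ?_⟩
  have hstat : ((2 * βI) • C + c • 1) *ᵥ wstar = βA • a - lamstar • ones := by
    rw [mulVec_mulVec, mul_nonsing_inv _ ((isUnit_iff_isUnit_det _).mp hA.isUnit), one_mulVec]
  have hgrad : (βA • a - c • wstar) - (2 * βI) • C *ᵥ wstar = lamstar • ones := by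
    rw [add_mulVec, smul_mulVec, smul_mulVec, one_mulVec] at hstat
    linear_combination (norm := module) -hstat
  have hy : ones ⬝ᵥ w = ones ⬝ᵥ wstar := by
    rw [hsum, ← hw]
    simp [ones, dotProduct]
  have hbest := hC.linear_sub_quadratic_le_of_gradient_eq_smul hβI.le hgrad hy
  simp only [sub_dotProduct, smul_dotProduct, smul_eq_mul, dotProduct_comm wstar w] at hbest
  linarith

/-- With `B = (2β_I C + (M−1)β_D I)⁻¹`, `λ* = (β_A 𝟙ᵀBa − 1)/(𝟙ᵀB𝟙)` and
`w* = B(β_A a − λ* 𝟙)`, the vector `w*` sums to one, and if all of its coordinates are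
strictly positive then the homogeneous profile in which every player plays `w*` is a
Nash equilibrium: no unilateral deviation within the simplex increases a player's
utility. -/
theorem stmt_9 (D M : ℕ) (hD : 0 < D) (hM : 2 ≤ M)
    (C : Matrix (Fin D) (Fin D) ℝ) (hC : C.PosSemidef)
    (a : Fin D → ℝ) (βA βI βD : ℝ) (hβA : 0 < βA) (hβI : 0 < βI) (hβD : 0 < βD) :
    let ones : Fin D → ℝ := fun _ => 1
    let B := ((2 * βI) • C + (((M : ℝ) - 1) * βD) • (1 : Matrix (Fin D) (Fin D) ℝ))⁻¹
    let lamstar := (βA * (ones ⬝ᵥ B *ᵥ a) - 1) / (ones ⬝ᵥ B *ᵥ ones)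
    let wstar := B *ᵥ (βA • a - lamstar • ones)
    (∑ i, wstar i = 1) ∧
    ((∀ i, 0 < wstar i) →
      ∀ w : Fin D → ℝ, (∀ i, 0 ≤ w i) → ∑ i, w i = 1 →
        βA * (a ⬝ᵥ w) - βI * (w ⬝ᵥ C *ᵥ w) - βD * ((M : ℝ) - 1) * (w ⬝ᵥ wstar)
          ≤ βA * (a ⬝ᵥ wstar) - βI * (wstar ⬝ᵥ C *ᵥ wstar)
            - βD * ((M : ℝ) - 1) * (wstar ⬝ᵥ wstar)) :=
  stmt_9_general D M hD hM C hC a βA βI βD hβI hβD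
end

section
/- Fix integers D ≥ 1 and M ≥ 2, a symmetric positive semidefinite real D×D matrix C, a vector a ∈ ℝ^D, and positive reals β_A, β_I, β_D. Assume A = 2β_I C − β_D I is invertible and α = 𝟙^T A^{-1} 𝟙 ≠ 0. Let B = (2β_I C + (M−1)β_D I)^{-1}, λ* = (β_A 𝟙^T B a − 1)/(𝟙^T B 𝟙), and w* = B(β_A a − λ* 𝟙). Then any interior Nash equilibrium is homogeneous and unique: if (w_1,…,w_M) is a Nash equilibrium of the game with utilities u_m(w_1,…,w_M) = β_A a⬝w_m − β_I w_m^T C w_m − β_D Σ_{j≠m} w_m⬝w_j in which every w_m lies in the interior of the simplex Δ_D (all coordinates strictly positive), then w_m = w* for every m. -/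
/-! At an interior point of the simplex, shifting mass between two coordinates is a feasible
direction of both signs, so each player's gradient `β_A a - 2β_I C w_m - β_D ∑_{j ≠ m} w_j` is a
multiple `λ_m 𝟙` of `𝟙`. Equivalently `A w_m + λ_m 𝟙 = β_A a - β_D ∑_j w_j`, whose right-hand side
does not depend on `m`. Hence `w_m - w_m'` is a multiple of `A⁻¹ 𝟙`; as both strategies sum to `1`
and `𝟙ᵀ A⁻¹ 𝟙 ≠ 0`, that multiple vanishes. Once all strategies agree, the condition reads
`(2β_I C + (M - 1)β_D I) w = β_A a - λ 𝟙` with a positive definite matrix, and `𝟙ᵀ w = 1`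
forces `λ = λ*`. -/

open Matrix Finset

section Simplex

variable {ι : Type*} [Fintype ι]

theorem eventually_add_smul_mem_stdSimplex {x d : ι → ℝ} (hx : ∑ i, x i = 1)
    (hpos : ∀ i, 0 < x i) (hd : ∑ i, d i = 0) :
    ∀ᶠ t in nhds (0 : ℝ), x + t • d ∈ stdSimplex ℝ ι := by
  have hcoord : ∀ i, ∀ᶠ t in nhds (0 : ℝ), 0 < x i + t * d i := fun i =>
    Filter.Tendsto.eventually_const_lt (hpos i)
      (by simpa using ((continuous_id.mul continuous_const).const_add (x i)).tendsto 0)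
  filter_upwards [Filter.eventually_all.2 hcoord] with t ht
  refine ⟨fun i => by simpa using (ht i).le, ?_⟩
  simp [Finset.sum_add_distrib, ← Finset.mul_sum, hx, hd]

theorem dotProduct_sub_dotProduct_mulVec_add_smul {Q : Matrix ι ι ℝ} (hQ : Q.IsSymm)
    (ℓ x d : ι → ℝ) (t : ℝ) :
    ℓ ⬝ᵥ (x + t • d) - (x + t • d) ⬝ᵥ Q *ᵥ (x + t • d)
      = (ℓ ⬝ᵥ x - x ⬝ᵥ Q *ᵥ x) + t * ((ℓ - (2 : ℝ) • Q *ᵥ x) ⬝ᵥ d)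
        - t ^ 2 * (d ⬝ᵥ Q *ᵥ d) := by
  have hsymm : x ⬝ᵥ Q *ᵥ d = d ⬝ᵥ Q *ᵥ x := by
    simpa [hQ.eq] using dotProduct_transpose_mulVec Q x d
  simp only [mulVec_add, mulVec_smul, dotProduct_add, add_dotProduct, dotProduct_smul,
    smul_dotProduct, sub_dotProduct, smul_eq_mul, hsymm, dotProduct_comm d (Q *ᵥ x)]
  ring

theorem exists_multiplier_of_isMaxOn_stdSimplex [DecidableEq ι] {Q : Matrix ι ι ℝ}
    (hQ : Q.IsSymm) {ℓ x : ι → ℝ} (hx : ∑ i, x i = 1) (hpos : ∀ i, 0 < x i)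
    (hmax : IsMaxOn (fun v => ℓ ⬝ᵥ v - v ⬝ᵥ Q *ᵥ v) (stdSimplex ℝ ι) x) :
    ∃ c : ℝ, ℓ - (2 : ℝ) • Q *ᵥ x = fun _ => c := by
  have hconst : ∀ i j, (ℓ - (2 : ℝ) • Q *ᵥ x) i = (ℓ - (2 : ℝ) • Q *ᵥ x) j := by
    intro i j
    set d : ι → ℝ := Pi.single i 1 - Pi.single j 1
    have hd : ∑ k, d k = 0 := by simp [d, Finset.sum_sub_distrib]
    have hloc : IsLocalMax
        (fun t : ℝ => ℓ ⬝ᵥ (x + t • d) - (x + t • d) ⬝ᵥ Q *ᵥ (x + t • d)) 0 := by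
      filter_upwards [eventually_add_smul_mem_stdSimplex hx hpos hd] with t ht
      simpa using hmax ht
    simp only [dotProduct_sub_dotProduct_mulVec_add_smul hQ] at hloc
    have hderiv := (((hasDerivAt_id (0 : ℝ)).mul_const ((ℓ - (2 : ℝ) • Q *ᵥ x) ⬝ᵥ d)).const_add
      (ℓ ⬝ᵥ x - x ⬝ᵥ Q *ᵥ x)).sub ((hasDerivAt_pow 2 (0 : ℝ)).mul_const (d ⬝ᵥ Q *ᵥ d))
    simpa [d, dotProduct_sub, sub_eq_zero] using hloc.hasDerivAt_eq_zero hderiv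
  obtain ⟨i₀, -⟩ := Finset.nonempty_of_sum_ne_zero (hx ▸ one_ne_zero : ∑ i, x i ≠ 0)
  exact ⟨_, funext fun i => hconst i i₀⟩

end Simplex

section LinearSystem

variable {K ι : Type*} [Field K] [Fintype ι] [DecidableEq ι]

theorem eq_of_mulVec_add_smul_eq {A : Matrix ι ι K} (hA : IsUnit A.det) {u x y : ι → K}
    {s t : K} (hu : u ⬝ᵥ A⁻¹ *ᵥ u ≠ 0) (hxy : u ⬝ᵥ x = u ⬝ᵥ y)
    (h : A *ᵥ x + s • u = A *ᵥ y + t • u) : x = y := by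
  have hdiff : x - y = (t - s) • A⁻¹ *ᵥ u := by
    have hA_diff : A *ᵥ (x - y) = (t - s) • u := by
      rw [mulVec_sub, sub_smul]
      linear_combination (norm := module) h
    rw [← mulVec_smul, ← hA_diff, mulVec_mulVec, nonsing_inv_mul _ hA, one_mulVec]
  have hst : t - s = 0 := by
    have := congrArg (u ⬝ᵥ ·) hdiff
    simp only [dotProduct_sub, hxy, sub_self, dotProduct_smul, smul_eq_mul] at this
    exact (mul_eq_zero.1 this.symm).resolve_right hu
  rwa [hst, zero_smul, sub_eq_zero] at hdiff

theorem eq_inv_mulVec_of_mulVec_eq_sub_smul {P : Matrix ι ι K} (hP : IsUnit P.det)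
    {u b w : ι → K} {s : K} (hu : u ⬝ᵥ P⁻¹ *ᵥ u ≠ 0) (hw : P *ᵥ w = b - s • u)
    (hwu : u ⬝ᵥ w = 1) :
    w = P⁻¹ *ᵥ (b - ((u ⬝ᵥ P⁻¹ *ᵥ b - 1) / (u ⬝ᵥ P⁻¹ *ᵥ u)) • u) := by
  have hw' : w = P⁻¹ *ᵥ (b - s • u) := by
    rw [← hw, mulVec_mulVec, nonsing_inv_mul _ hP, one_mulVec]
  have hs : s = (u ⬝ᵥ P⁻¹ *ᵥ b - 1) / (u ⬝ᵥ P⁻¹ *ᵥ u) := by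
    rw [hw', mulVec_sub, mulVec_smul, dotProduct_sub, dotProduct_smul, smul_eq_mul] at hwu
    field_simp
    linear_combination -hwu
  rwa [hs] at hw'

end LinearSystem

section Game

variable {ι : Type*} [Fintype ι] {M : ℕ}

def payoff (a : ι → ℝ) (C : Matrix ι ι ℝ) (βA βI βD : ℝ) (w : Fin M → ι → ℝ) (m : Fin M)
    (v : ι → ℝ) : ℝ :=
  βA * (a ⬝ᵥ v) - βI * (v ⬝ᵥ C *ᵥ v) - βD * ∑ j ∈ univ.erase m, v ⬝ᵥ w j

theorem payoff_eq (a : ι → ℝ) (C : Matrix ι ι ℝ) (βA βI βD : ℝ) (w : Fin M → ι → ℝ)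
    (m : Fin M) :
    payoff a C βA βI βD w m
      = fun v => (βA • a - βD • (∑ j, w j - w m)) ⬝ᵥ v - v ⬝ᵥ (βI • C) *ᵥ v := by
  funext v
  rw [payoff, ← sum_erase_eq_sub (mem_univ m), sub_dotProduct, smul_dotProduct,
    smul_dotProduct, sum_dotProduct, smul_mulVec, dotProduct_smul, dotProduct_comm a]
  simp only [smul_eq_mul, dotProduct_comm _ v]
  ring

theorem exists_mulVec_add_smul_eq_of_isMaxOn_payoff [DecidableEq ι] {a : ι → ℝ}
    {C : Matrix ι ι ℝ} (hC : C.IsSymm) {βA βI βD : ℝ} {w : Fin M → ι → ℝ} {m : Fin M} (hw : ∑ i, w m i = 1)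
    (hpos : ∀ i, 0 < w m i) (hmax : IsMaxOn (payoff a C βA βI βD w m) (stdSimplex ℝ ι) (w m)) :
    ∃ c : ℝ, ((2 * βI) • C - βD • 1) *ᵥ w m + c • (fun _ => 1) = βA • a - βD • ∑ j, w j := by
  rw [payoff_eq] at hmax
  obtain ⟨c, hc⟩ := exists_multiplier_of_isMaxOn_stdSimplex (hC.smul βI) hw hpos hmax
  refine ⟨c, funext fun i => ?_⟩
  have hci := congrFun hc i
  simp only [Pi.sub_apply, Pi.smul_apply, smul_eq_mul, Pi.add_apply, sub_mulVec, smul_mulVec,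
    one_mulVec] at hci ⊢
  linarith

end Game

theorem stmt_10_general (D M : ℕ) (hD : 0 < D) (hM : 2 ≤ M)
    (C : Matrix (Fin D) (Fin D) ℝ) (hC : C.PosSemidef)
    (a : Fin D → ℝ) (βA βI βD : ℝ) (hβI : 0 < βI) (hβD : 0 < βD)
    (hAinv : IsUnit ((2 * βI) • C - βD • (1 : Matrix (Fin D) (Fin D) ℝ)).det)
    (hα : (fun _ => (1 : ℝ)) ⬝ᵥ
        ((2 * βI) • C - βD • (1 : Matrix (Fin D) (Fin D) ℝ))⁻¹ *ᵥ (fun _ => (1 : ℝ)) ≠ 0)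
    (w : Fin M → Fin D → ℝ)
    (hint : ∀ m i, 0 < w m i) (hsum : ∀ m, ∑ i, w m i = 1)
    (hNE : ∀ m, ∀ v : Fin D → ℝ, (∀ i, 0 ≤ v i) → ∑ i, v i = 1 →
        βA * (a ⬝ᵥ v) - βI * (v ⬝ᵥ C *ᵥ v)
            - βD * ∑ j ∈ Finset.univ.erase m, v ⬝ᵥ w j
          ≤ βA * (a ⬝ᵥ w m) - βI * (w m ⬝ᵥ C *ᵥ w m)
            - βD * ∑ j ∈ Finset.univ.erase m, w m ⬝ᵥ w j) :
    let ones : Fin D → ℝ := fun _ => 1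
    let B := ((2 * βI) • C + (((M : ℝ) - 1) * βD) • (1 : Matrix (Fin D) (Fin D) ℝ))⁻¹
    let lamstar := (βA * (ones ⬝ᵥ B *ᵥ a) - 1) / (ones ⬝ᵥ B *ᵥ ones)
    let wstar := B *ᵥ (βA • a - lamstar • ones)
    ∀ m, w m = wstar := by
  intro ones B lamstar wstar
  choose lam hlam using fun m => exists_mulVec_add_smul_eq_of_isMaxOn_payoff
    (isHermitian_iff_isSymm.1 hC.isHermitian) (hsum m) (hint m)
    (isMaxOn_iff.2 fun v hv => hNE m v hv.1 hv.2)
  have hones : ∀ m, ones ⬝ᵥ w m = 1 := fun m => by simpa [ones, dotProduct] using hsum m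
  have hhom : ∀ m m', w m = w m' := fun m m' =>
    eq_of_mulVec_add_smul_eq hAinv hα ((hones m).trans (hones m').symm)
      ((hlam m).trans (hlam m').symm)
  intro m
  have hS : ∑ j, w j = (M : ℝ) • w m := by
    simp only [hhom _ m, sum_const, card_univ, Fintype.card_fin, Nat.cast_smul_eq_nsmul]
  set P := (2 * βI) • C + (((M : ℝ) - 1) * βD) • (1 : Matrix (Fin D) (Fin D) ℝ)
  have hP : P.PosDef := by
    have hM1 : (0 : ℝ) < M - 1 := by
      have : (2 : ℝ) ≤ M := by exact_mod_cast hM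
      linarith
    exact PosDef.posSemidef_add (hC.smul (by positivity)) (PosDef.one.smul (mul_pos hM1 hβD))
  have hPw : P *ᵥ w m = βA • a - lam m • ones := by
    funext i
    have hi := congrFun (hlam m) i
    simp only [P, hS, add_mulVec, sub_mulVec, smul_mulVec, one_mulVec, Pi.add_apply,
      Pi.sub_apply, Pi.smul_apply, smul_eq_mul, mul_one] at hi ⊢
    linarith
  have hu : ones ⬝ᵥ B *ᵥ ones ≠ 0 := by
    simpa using (hP.inv.dotProduct_mulVec_pos fun h => one_ne_zero (congrFun h ⟨0, hD⟩)).ne'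
  have hw := eq_inv_mulVec_of_mulVec_eq_sub_smul ((isUnit_iff_isUnit_det _).1 hP.isUnit) hu hPw
    (hones m)
  rwa [mulVec_smul, dotProduct_smul, smul_eq_mul] at hw

/-- Uniqueness and homogeneity of the interior Nash equilibrium: assuming
`A = 2β_I C − β_D I` is invertible and `α = 𝟙ᵀA⁻¹𝟙 ≠ 0`, any Nash equilibrium
`(w_1,…,w_M)` all of whose strategies lie in the interior of the simplex satisfies
`w_m = w* = B(β_A a − λ* 𝟙)` for every `m`, where
`B = (2β_I C + (M−1)β_D I)⁻¹` and `λ* = (β_A 𝟙ᵀBa − 1)/(𝟙ᵀB𝟙)`. -/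
theorem stmt_10 (D M : ℕ) (hD : 0 < D) (hM : 2 ≤ M)
    (C : Matrix (Fin D) (Fin D) ℝ) (hC : C.PosSemidef)
    (a : Fin D → ℝ) (βA βI βD : ℝ) (hβA : 0 < βA) (hβI : 0 < βI) (hβD : 0 < βD)
    (hAinv : IsUnit ((2 * βI) • C - βD • (1 : Matrix (Fin D) (Fin D) ℝ)).det)
    (hα : (fun _ => (1 : ℝ)) ⬝ᵥ
        ((2 * βI) • C - βD • (1 : Matrix (Fin D) (Fin D) ℝ))⁻¹ *ᵥ (fun _ => (1 : ℝ)) ≠ 0)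
    (w : Fin M → Fin D → ℝ)
    (hint : ∀ m i, 0 < w m i) (hsum : ∀ m, ∑ i, w m i = 1)
    (hNE : ∀ m, ∀ v : Fin D → ℝ, (∀ i, 0 ≤ v i) → ∑ i, v i = 1 →
        βA * (a ⬝ᵥ v) - βI * (v ⬝ᵥ C *ᵥ v)
            - βD * ∑ j ∈ Finset.univ.erase m, v ⬝ᵥ w j
          ≤ βA * (a ⬝ᵥ w m) - βI * (w m ⬝ᵥ C *ᵥ w m)
            - βD * ∑ j ∈ Finset.univ.erase m, w m ⬝ᵥ w j) :
    let ones : Fin D → ℝ := fun _ => 1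
    let B := ((2 * βI) • C + (((M : ℝ) - 1) * βD) • (1 : Matrix (Fin D) (Fin D) ℝ))⁻¹
    let lamstar := (βA * (ones ⬝ᵥ B *ᵥ a) - 1) / (ones ⬝ᵥ B *ᵥ ones)
    let wstar := B *ᵥ (βA • a - lamstar • ones)
    ∀ m, w m = wstar :=
  stmt_10_general D M hD hM C hC a βA βI βD hβI hβD hAinv hα w hint hsum hNE
end
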